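/- Let V be a finite-dimensional complex vector space, let B be a nondegenerate symmetric bilinear form on V, and let g : V → V be a linear automorphism satisfying B(g(x), g(y)) = B(x, y) for all x, y ∈ V. Then for every nonzero ρ ∈ ℂ, the eigenspace of g for the eigenvalue ρ and the eigenspace of g for the eigenvalue ρ⁻¹ have the same dimension. -/

import Mathlib

/-!
Nondegeneracy makes `x ↦ B x` an isomorphism `V ≃ Dual V`, and invariance of `B` says that it
intertwines `g` with the transpose of `g⁻¹`. Hence the `ρ`-eigenspace of `g` has the dimension of
the `ρ`-eigenspace of `(g⁻¹)ᵀ`, i.e. of `g⁻¹` (a map and its transpose have kernels of equal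
dimension), which is the `ρ⁻¹`-eigenspace of `g`.
-/

open Module LinearMap

section Field

variable {K V W : Type*} [Field K] [AddCommGroup V] [Module K V] [AddCommGroup W] [Module K W]

namespace LinearEquiv

theorem eigenspace_symm (e : V ≃ₗ[K] V) {μ : K} (hμ : μ ≠ 0) :
    End.eigenspace (e.symm : End K V) μ = End.eigenspace (e : End K V) μ⁻¹ := by
  ext x
  simp only [End.mem_eigenspace_iff, coe_coe]
  rw [symm_apply_eq, map_smul, eq_inv_smul_iff₀ hμ, eq_comm]

theorem finrank_eigenspace_eq_of_comp_eq (φ : V ≃ₗ[K] W) {f : End K V} {f' : End K W}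
    (h : (φ : V →ₗ[K] W) ∘ₗ f = f' ∘ₗ φ) (μ : K) :
    finrank K (End.eigenspace f' μ) = finrank K (End.eigenspace f μ) := by
  have hcomap : End.eigenspace f μ = (End.eigenspace f' μ).comap (φ : V →ₗ[K] W) := by
    ext x
    have hx : φ (f x) = f' (φ x) := LinearMap.congr_fun h x
    rw [Submodule.mem_comap, End.mem_eigenspace_iff, End.mem_eigenspace_iff, coe_coe,
      ← hx, ← map_smul, φ.injective.eq_iff]
  rw [hcomap, Submodule.comap_equiv_eq_map_symm, finrank_map_eq]

end LinearEquiv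

theorem LinearMap.finrank_ker_dualMap [FiniteDimensional K V] (f : End K V) :
    finrank K (ker f.dualMap) = finrank K (ker f) := by
  have := f.dualMap.finrank_range_add_finrank_ker
  have := f.finrank_range_add_finrank_ker
  have := f.finrank_range_dualMap_eq_finrank_range
  have : finrank K (Dual K V) = finrank K V := Subspace.dual_finrank_eq
  omega

theorem Module.End.finrank_eigenspace_dualMap [FiniteDimensional K V] (f : End K V) (μ : K) :
    finrank K (End.eigenspace f.dualMap μ) = finrank K (End.eigenspace f μ) := by
  have hdual : (f - μ • 1).dualMap = f.dualMap - μ • 1 := by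
    ext
    simp [dualMap_apply']
  rw [End.eigenspace_def, End.eigenspace_def, ← hdual, finrank_ker_dualMap]

theorem LinearMap.BilinForm.comp_eq_dualMap_symm_comp {B : LinearMap.BilinForm K V} {g : V ≃ₗ[K] V}
    (hg : ∀ x y, B (g x) (g y) = B x y) :
    B ∘ₗ (g : V →ₗ[K] V) = (g.symm : V →ₗ[K] V).dualMap ∘ₗ B := by
  ext x y
  simp [dualMap_apply', ← hg x (g.symm y)]

end Field

theorem eigenspace_finrank_eq_of_preserves_bilin_general
    (V : Type*) [AddCommGroup V] [Module ℂ V] [FiniteDimensional ℂ V]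
    (B : V →ₗ[ℂ] V →ₗ[ℂ] ℂ)
    (hnd : ∀ x : V, (∀ y : V, B x y = 0) → x = 0)
    (g : V ≃ₗ[ℂ] V) (hg : ∀ x y : V, B (g x) (g y) = B x y)
    (ρ : ℂ) (hρ : ρ ≠ 0) :
    Module.finrank ℂ (Module.End.eigenspace (g : V →ₗ[ℂ] V) ρ) =
      Module.finrank ℂ (Module.End.eigenspace (g : V →ₗ[ℂ] V) ρ⁻¹) := by
  have hB : Function.Injective B :=
    (injective_iff_map_eq_zero B).2 fun x hx => hnd x fun y => by simp [hx]
  let φ : V ≃ₗ[ℂ] Dual ℂ V := B.linearEquivOfInjective hB Subspace.dual_finrank_eq.symm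
  calc finrank ℂ (End.eigenspace (g : V →ₗ[ℂ] V) ρ)
      = finrank ℂ (End.eigenspace (g.symm : V →ₗ[ℂ] V).dualMap ρ) :=
        (φ.finrank_eigenspace_eq_of_comp_eq
          (LinearMap.BilinForm.comp_eq_dualMap_symm_comp hg) ρ).symm
    _ = finrank ℂ (End.eigenspace (g.symm : V →ₗ[ℂ] V) ρ) := End.finrank_eigenspace_dualMap _ ρ
    _ = finrank ℂ (End.eigenspace (g : V →ₗ[ℂ] V) ρ⁻¹) := by rw [g.eigenspace_symm hρ]

/-- If `g` is a linear automorphism of a finite-dimensional complex vector space preserving a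
nondegenerate symmetric bilinear form `B`, then for every nonzero `ρ : ℂ` the eigenspaces of `g`
for `ρ` and for `ρ⁻¹` have the same dimension. -/
theorem eigenspace_finrank_eq_of_preserves_bilin
    (V : Type*) [AddCommGroup V] [Module ℂ V] [FiniteDimensional ℂ V]
    (B : V →ₗ[ℂ] V →ₗ[ℂ] ℂ)
    (hsymm : ∀ x y : V, B x y = B y x)
    (hnd : ∀ x : V, (∀ y : V, B x y = 0) → x = 0)
    (g : V ≃ₗ[ℂ] V) (hg : ∀ x y : V, B (g x) (g y) = B x y)
    (ρ : ℂ) (hρ : ρ ≠ 0) :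
    Module.finrank ℂ (Module.End.eigenspace (g : V →ₗ[ℂ] V) ρ) =
      Module.finrank ℂ (Module.End.eigenspace (g : V →ₗ[ℂ] V) ρ⁻¹) :=
  eigenspace_finrank_eq_of_preserves_bilin_general V B hnd g hg ρ hρ
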